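/- Let τ and κ be the operators on smooth functions on ℂ^{(p+q)×p} associated to the semi-Euclidean metric (as in the definition below). If φ₁,…,φₙ are smooth complex-valued functions with τ(φ_k) = 0 and κ(φ_k, φ_l) = 0 for all k,l, and F, G : U → ℂ are holomorphic functions on an open set U ⊆ ℂⁿ containing the image of (φ₁,…,φₙ), then the functions ψ₁ = F(φ₁,…,φₙ) and ψ₂ = G(φ₁,…,φₙ) satisfy τ(ψ₁) = 0, τ(ψ₂) = 0, and κ(ψ₁, ψ₂) = 0. -/

import Mathlib

open Complex

noncomputable section

abbrev MatSpace (p q : ℕ) := Fin (p + q) → Fin p → ℂ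

def basE (p q : ℕ) (k : Fin (p + q)) (l : Fin p) : MatSpace p q :=
  fun a b => if a = k ∧ b = l then 1 else 0

def wz (p q : ℕ) (f : MatSpace p q → ℂ) (x v : MatSpace p q) : ℂ :=
  (fderiv ℝ f x v - Complex.I * fderiv ℝ f x (Complex.I • v)) / 2

def wzbar (p q : ℕ) (f : MatSpace p q → ℂ) (x v : MatSpace p q) : ℂ :=
  (fderiv ℝ f x v + Complex.I * fderiv ℝ f x (Complex.I • v)) / 2

def tauSemi (p q : ℕ) (f : MatSpace p q → ℂ) (x : MatSpace p q) : ℂ :=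
  ∑ k : Fin (p + q), ∑ l : Fin p,
    (if (k : ℕ) < p then (-4 : ℂ) else 4) *
      wz p q (fun y => wzbar p q f y (basE p q k l)) x (basE p q k l)

def kapSemi (p q : ℕ) (f g : MatSpace p q → ℂ) (x : MatSpace p q) : ℂ :=
  ∑ k : Fin (p + q), ∑ l : Fin p,
    (if (k : ℕ) < p then (-2 : ℂ) else 2) *
      (wz p q f x (basE p q k l) * wzbar p q g x (basE p q k l)
        + wzbar p q f x (basE p q k l) * wz p q g x (basE p q k l))

set_option synthInstance.maxHeartbeats 1000000
set_option maxHeartbeats 1600000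
section Aux
open Metric MeasureTheory intervalIntegral Real Topology Filter

variable {n : ℕ}


/-- norm of CLM on pi-space bounded by sum of values on basis vectors -/
lemma clm_norm_le (L : (Fin n → ℂ) →L[ℂ] ℂ) {B : ℝ} (hB : 0 ≤ B)
    (h : ∀ j, ‖L (Pi.single j 1)‖ ≤ B) : ‖L‖ ≤ n * B := by
  refine ContinuousLinearMap.opNorm_le_bound _ (by positivity) (fun u => ?_)
  have hu : u = ∑ j, u j • (Pi.single j (1:ℂ) : Fin n → ℂ) := by
    funext i
    simp [Finset.sum_apply, Pi.single_apply, Finset.sum_ite_eq', mul_comm]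
  calc ‖L u‖ = ‖∑ j, u j • L (Pi.single j 1)‖ := by
        conv_lhs => rw [hu]
        rw [map_sum]
        simp
    _ ≤ ∑ j, ‖u j • L (Pi.single j 1)‖ := norm_sum_le _ _
    _ ≤ ∑ j : Fin n, ‖u‖ * B := by
        refine Finset.sum_le_sum (fun j _ => ?_)
        rw [norm_smul]
        exact mul_le_mul (norm_le_pi_norm u j) (h j) (norm_nonneg _) (norm_nonneg _)
    _ = n * B * ‖u‖ := by simp [Finset.sum_const]; ring

lemma translate_hasDerivAt (F : (Fin n → ℂ) → ℂ) (w : Fin n → ℂ) (e : Fin n → ℂ)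
    (hF : DifferentiableAt ℂ F w) :
    HasDerivAt (fun z : ℂ => F (w + z • e)) (fderiv ℂ F w e) 0 := by
  have h1 : HasDerivAt (fun z : ℂ => w + z • e) e 0 := by
    simpa using ((hasDerivAt_id (0:ℂ)).smul_const e).const_add w
  have h2 : HasFDerivAt F (fderiv ℂ F w) ((fun z : ℂ => w + z • e) 0) := by
    simpa using hF.hasFDerivAt
  exact h2.comp_hasDerivAt 0 h1

lemma fderiv_bound {U : Set (Fin n → ℂ)} (hU : IsOpen U) {F : (Fin n → ℂ) → ℂ}
    (hF : DifferentiableOn ℂ F U) {w0 : Fin n → ℂ} {δ M : ℝ} (δpos : 0 < δ) (hM : 0 ≤ M)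
    (hδ : closedBall w0 (3*δ) ⊆ U)
    (hMb : ∀ w ∈ closedBall w0 (3*δ), ‖F w‖ ≤ M)
    {w : Fin n → ℂ} (hw : w ∈ closedBall w0 (2*δ)) :
    ‖fderiv ℂ F w‖ ≤ n * (M / δ) := by
  have hFd : ∀ v ∈ closedBall w0 (3*δ), DifferentiableAt ℂ F v := fun v hv =>
    hF.differentiableAt (hU.mem_nhds (hδ hv))
  refine clm_norm_le _ (by positivity) (fun j => ?_)
  set e : Fin n → ℂ := Pi.single j 1 with he
  have hne : ‖e‖ ≤ 1 := by
    rw [he, Pi.norm_single]; simp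
  have hmem : ∀ z : ℂ, ‖z‖ ≤ δ → w + z • e ∈ closedBall w0 (3*δ) := by
    intro z hz
    rw [mem_closedBall, dist_eq_norm]
    calc ‖w + z • e - w0‖ = ‖(w - w0) + z • e‖ := by ring_nf
      _ ≤ ‖w - w0‖ + ‖z • e‖ := norm_add_le _ _
      _ ≤ 2*δ + ‖z‖ * ‖e‖ := by
          gcongr
          · exact mem_closedBall_iff_norm.1 hw
          · rw [norm_smul]
      _ ≤ 2*δ + δ * 1 := by
          have : ‖z‖ * ‖e‖ ≤ δ * 1 := mul_le_mul hz hne (norm_nonneg _) δpos.le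
          linarith
      _ = 3*δ := by ring
  set g : ℂ → ℂ := fun z => F (w + z • e) with hg
  have hgd : DifferentiableOn ℂ g (closedBall 0 δ) := by
    intro z hz
    have : DifferentiableAt ℂ g z := by
      have h1 : DifferentiableAt ℂ (fun z : ℂ => w + z • e) z :=
        ((differentiableAt_fun_id).smul_const e).const_add w
      exact (hFd _ (hmem z (by simpa [dist_eq_norm] using hz))).comp z h1
    exact this.differentiableWithinAt
  have hw3 : w ∈ closedBall w0 (3*δ) := by
    have := hmem 0 (by simp [δpos.le]); simpa using this
  have hderiv : HasDerivAt g (fderiv ℂ F w e) 0 :=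
    translate_hasDerivAt F w e (hFd _ hw3)
  have hcl : DiffContOnCl ℂ g (ball 0 δ) :=
    DifferentiableOn.diffContOnCl (by rwa [closure_ball 0 δpos.ne'])
  have hest := Complex.norm_deriv_le_of_forall_mem_sphere_norm_le δpos hcl
    (C := M) (fun z hz => hMb _ (hmem z (by simp [mem_sphere_iff_norm] at hz; simp [hz])))
  rw [hderiv.deriv] at hest
  calc ‖fderiv ℂ F w e‖ ≤ M / δ := hest
    _ ≤ M / δ := le_rfl

lemma diffAt_fderiv_single_aux {U : Set (Fin n → ℂ)} (hU : IsOpen U) {F : (Fin n → ℂ) → ℂ}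
    (hF : DifferentiableOn ℂ F U) {w0 : Fin n → ℂ} {δ : ℝ} (δpos : 0 < δ)
    (hδ : closedBall w0 (3*δ) ⊆ U) (m : Fin n) :
    DifferentiableAt ℂ (fun w => fderiv ℂ F w (Pi.single m 1)) w0 := by
  set e : Fin n → ℂ := Pi.single m 1 with he
  have hne : ‖e‖ ≤ 1 := by rw [he, Pi.norm_single]; simp
  have hmem : ∀ w ∈ ball w0 δ, ∀ z : ℂ, ‖z‖ ≤ δ → w + z • e ∈ closedBall w0 (2*δ) := by
    intro w hw z hz
    rw [mem_closedBall, dist_eq_norm]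
    have h1 : ‖w - w0‖ < δ := by rwa [mem_ball, dist_eq_norm] at hw
    have h2 : ‖z • e‖ ≤ δ := by
      rw [norm_smul]
      calc ‖z‖ * ‖e‖ ≤ δ * 1 := mul_le_mul hz hne (norm_nonneg _) δpos.le
        _ = δ := by ring
    calc ‖w + z • e - w0‖ = ‖(w - w0) + z • e‖ := by ring_nf
      _ ≤ ‖w - w0‖ + ‖z • e‖ := norm_add_le _ _
      _ ≤ 2*δ := by linarith
  have hsub : closedBall w0 (2*δ) ⊆ closedBall w0 (3*δ) :=
    closedBall_subset_closedBall (by linarith)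
  obtain ⟨M0, hM0⟩ := (isCompact_closedBall w0 (3*δ)).exists_bound_of_continuousOn
    (hF.continuousOn.mono hδ)
  set M : ℝ := max M0 0 with hM
  have hMnn : 0 ≤ M := le_max_right _ _
  have hMb : ∀ w ∈ closedBall w0 (3*δ), ‖F w‖ ≤ M := fun w hw =>
    (hM0 w hw).trans (le_max_left _ _)
  have hFd : ∀ v ∈ closedBall w0 (3*δ), DifferentiableAt ℂ F v := fun v hv =>
    hF.differentiableAt (hU.mem_nhds (hδ hv))
  -- the kernel
  set k : ℝ → ℂ := fun θ => deriv (circleMap 0 δ) θ * (circleMap 0 δ θ)⁻¹ ^ 2 with hk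
  have hknorm : ∀ θ, ‖k θ‖ = δ⁻¹ := by
    intro θ
    rw [hk]
    simp only [deriv_circleMap, norm_mul, norm_pow, norm_inv]
    simp only [norm_circleMap_zero, Complex.norm_I]
    rw [_root_.abs_of_pos δpos]
    field_simp
  have hkcont : Continuous k := by
    rw [hk]
    have h0 : ∀ θ, circleMap 0 δ θ ≠ 0 := fun θ => by
      simpa using circleMap_ne_center (R := δ) δpos.ne' (c := 0) (θ := θ)
    simp only [deriv_circleMap]
    exact ((continuous_circleMap 0 δ).mul continuous_const).mul
      (((continuous_circleMap 0 δ).inv₀ h0).pow 2)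
  set Q : (Fin n → ℂ) → ℝ → ℂ := fun w θ => k θ * F (w + circleMap 0 δ θ • e) with hQ
  set Q' : (Fin n → ℂ) → ℝ → ((Fin n → ℂ) →L[ℂ] ℂ) :=
    fun w θ => k θ • fderiv ℂ F (w + circleMap 0 δ θ • e) with hQ'
  have hcm : ∀ θ, ‖circleMap 0 δ θ‖ ≤ δ := fun θ => by
    rw [norm_circleMap_zero, _root_.abs_of_pos δpos]
  -- representation formula
  have hrep : ∀ w ∈ ball w0 δ, fderiv ℂ F w e
      = (2 * π * I : ℂ)⁻¹ • ∫ θ in (0:ℝ)..(2*π), Q w θ := by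
    intro w hw
    set g : ℂ → ℂ := fun z => F (w + z • e) with hgdef
    have hgd : DifferentiableOn ℂ g (closedBall (0:ℂ) δ) := by
      intro z hz
      have hz' : ‖z‖ ≤ δ := by simpa [mem_closedBall, dist_eq_norm] using hz
      have h1 : DifferentiableAt ℂ (fun z : ℂ => w + z • e) z :=
        ((differentiableAt_fun_id).smul_const e).const_add w
      exact ((hFd _ (hsub (hmem w hw z hz'))).comp z h1).differentiableWithinAt
    set R : NNReal := δ.toNNReal with hR
    have hRδ : (R : ℝ) = δ := Real.coe_toNNReal _ δpos.le
    have hRpos : 0 < R := Real.toNNReal_pos.2 δpos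
    have hps : HasFPowerSeriesOnBall g (cauchyPowerSeries g 0 R) 0 R := by
      apply DifferentiableOn.hasFPowerSeriesOnBall _ hRpos
      rwa [hRδ]
    have hwmem : w ∈ closedBall w0 (3*δ) := by
      simpa using hsub (hmem w hw 0 (by simp [δpos.le]))
    have hder : HasDerivAt g (fderiv ℂ F w e) 0 :=
      translate_hasDerivAt F w e (hFd _ hwmem)
    have h1 : fderiv ℂ F w e = cauchyPowerSeries g 0 R 1 (fun _ => 1) := by
      rw [← hder.deriv]
      exact hps.hasFPowerSeriesAt.deriv
    rw [h1, cauchyPowerSeries_apply, hRδ]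
    congr 1
    rw [circleIntegral]
    apply intervalIntegral.integral_congr
    intro θ _
    simp only [hQ, hk, smul_eq_mul, sub_zero, one_div, pow_one]
    ring
  -- the parametric integral
  have h2π : (0:ℝ) ≤ 2*π := by positivity
  set μ : Measure ℝ := volume.restrict (Set.Ioc (0:ℝ) (2*π)) with hμ
  have hQcont : ∀ w ∈ ball w0 δ, Continuous (fun θ => Q w θ) := by
    intro w hw
    apply hkcont.mul
    apply (hF.continuousOn.mono hδ).comp_continuous
    · exact continuous_const.add ((continuous_circleMap 0 δ).smul continuous_const)
    · exact fun θ => hsub (hmem w hw _ (hcm θ))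
  have key : HasFDerivAt (fun w => ∫ θ, Q w θ ∂μ) (∫ θ, Q' w0 θ ∂μ) w0 := by
    apply _root_.hasFDerivAt_integral_of_dominated_of_fderiv_le (s := ball w0 δ)
      (bound := fun _ => δ⁻¹ * (n * (M/δ))) (ball_mem_nhds w0 δpos)
    · filter_upwards [ball_mem_nhds w0 δpos] with w hw
      exact (hQcont w hw).aestronglyMeasurable
    · exact ((hQcont w0 (mem_ball_self δpos)).integrableOn_Ioc)
    · apply AEStronglyMeasurable.smul hkcont.aestronglyMeasurable
      apply Measurable.aestronglyMeasurable
      exact (measurable_fderiv ℂ F).comp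
        (continuous_const.add ((continuous_circleMap 0 δ).smul continuous_const)).measurable
    · apply Filter.Eventually.of_forall
      intro θ w hw
      have hns := norm_smul (k θ) (fderiv ℂ F (w + circleMap 0 δ θ • e))
      rw [hQ']
      simp only []
      rw [hns, hknorm]
      gcongr
      exact fderiv_bound hU hF δpos hMnn hδ hMb (hmem w hw _ (hcm θ))
    · exact (integrableOn_const measure_Ioc_lt_top.ne)
    · apply Filter.Eventually.of_forall
      intro θ w hw
      have ht : HasFDerivAt (fun w : Fin n → ℂ => w + circleMap 0 δ θ • e)
          (ContinuousLinearMap.id ℂ _) w := (hasFDerivAt_id w).add_const _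
      have hFat := (hFd _ (hsub (hmem w hw _ (hcm θ)))).hasFDerivAt
      have hcomp := hFat.comp w ht
      rw [ContinuousLinearMap.comp_id] at hcomp
      exact hcomp.const_mul (k θ)
  have heq : (fun w => fderiv ℂ F w e) =ᶠ[𝓝 w0]
      fun w => (2*π*I:ℂ)⁻¹ • ∫ θ, Q w θ ∂μ := by
    filter_upwards [ball_mem_nhds w0 δpos] with w hw
    rw [hrep w hw]
    congr 1
    exact intervalIntegral.integral_of_le h2π
  exact (key.differentiableAt.fun_const_smul _).congr_of_eventuallyEq heq


lemma ball_small {U : Set (Fin n → ℂ)} (hU : IsOpen U) {w0 : Fin n → ℂ} (hw0 : w0 ∈ U) :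
    ∃ δ > 0, closedBall w0 (3*δ) ⊆ U := by
  obtain ⟨ε, εpos, hε⟩ := Metric.isOpen_iff.1 hU w0 hw0
  refine ⟨ε/4, by positivity, fun z hz => hε ?_⟩
  rw [mem_ball]
  have := mem_closedBall.1 hz
  linarith

lemma diffAt_fderiv_single {U : Set (Fin n → ℂ)} (hU : IsOpen U) {F : (Fin n → ℂ) → ℂ}
    (hF : DifferentiableOn ℂ F U) {w0 : Fin n → ℂ} (hw0 : w0 ∈ U) (m : Fin n) :
    DifferentiableAt ℂ (fun w => fderiv ℂ F w (Pi.single m 1)) w0 := by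
  obtain ⟨δ, δpos, hδ⟩ := ball_small hU hw0
  exact diffAt_fderiv_single_aux hU hF δpos hδ m

lemma clm_decomp (L : (Fin n → ℂ) →L[ℂ] ℂ) (u : Fin n → ℂ) :
    L u = ∑ m, u m * L (Pi.single m 1) := by
  have hu : u = ∑ j, u j • (Pi.single j (1:ℂ) : Fin n → ℂ) := by
    funext i
    simp [Finset.sum_apply, Pi.single_apply, Finset.sum_ite_eq', mul_comm]
  conv_lhs => rw [hu]
  rw [map_sum]
  simp [smul_eq_mul]

lemma diffAt_fderiv {U : Set (Fin n → ℂ)} (hU : IsOpen U) {F : (Fin n → ℂ) → ℂ}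
    (hF : DifferentiableOn ℂ F U) {w0 : Fin n → ℂ} (hw0 : w0 ∈ U) :
    DifferentiableAt ℂ (fderiv ℂ F) w0 := by
  have hfun : (fderiv ℂ F) = fun w => ∑ m, (fderiv ℂ F w (Pi.single m 1)) •
      (ContinuousLinearMap.proj m : (Fin n → ℂ) →L[ℂ] ℂ) := by
    funext w
    refine ContinuousLinearMap.ext (fun u => ?_)
    rw [ContinuousLinearMap.sum_apply]
    rw [clm_decomp (fderiv ℂ F w) u]
    refine Finset.sum_congr rfl (fun m _ => ?_)
    rw [ContinuousLinearMap.smul_apply, ContinuousLinearMap.proj_apply]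
    simp [mul_comm]
  rw [hfun]
  apply DifferentiableAt.fun_sum
  intro m _
  exact (diffAt_fderiv_single hU hF hw0 m).smul_const _

lemma snd_deriv_symm {U : Set (Fin n → ℂ)} (hU : IsOpen U) {F : (Fin n → ℂ) → ℂ}
    (hF : DifferentiableOn ℂ F U) {w0 : Fin n → ℂ} (hw0 : w0 ∈ U) (v w : Fin n → ℂ) :
    fderiv ℂ (fderiv ℂ F) w0 v w = fderiv ℂ (fderiv ℂ F) w0 w v := by
  apply second_derivative_symmetric_of_eventually (f := F) (f' := fderiv ℂ F)
  · filter_upwards [hU.mem_nhds hw0] with y hy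
    exact (hF.differentiableAt (hU.mem_nhds hy)).hasFDerivAt
  · exact (diffAt_fderiv hU hF hw0).hasFDerivAt

lemma fderiv_single_fderiv {U : Set (Fin n → ℂ)} (hU : IsOpen U) {F : (Fin n → ℂ) → ℂ}
    (hF : DifferentiableOn ℂ F U) {w0 : Fin n → ℂ} (hw0 : w0 ∈ U) (m j : Fin n) :
    fderiv ℂ (fun w => fderiv ℂ F w (Pi.single m 1)) w0 (Pi.single j 1)
      = fderiv ℂ (fderiv ℂ F) w0 (Pi.single j 1) (Pi.single m 1) := by
  have hc : HasFDerivAt (fun w => fderiv ℂ F w (Pi.single m 1))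
      ((ContinuousLinearMap.apply ℂ ℂ (Pi.single m 1)).comp
        (fderiv ℂ (fderiv ℂ F) w0)) w0 := by
    exact (ContinuousLinearMap.apply ℂ ℂ (Pi.single m 1)).hasFDerivAt.comp w0
      (diffAt_fderiv hU hF hw0).hasFDerivAt
  rw [hc.fderiv]
  rfl

/-- symmetry of the mixed second partials -/
lemma mixed_symm {U : Set (Fin n → ℂ)} (hU : IsOpen U) {F : (Fin n → ℂ) → ℂ}
    (hF : DifferentiableOn ℂ F U) {w0 : Fin n → ℂ} (hw0 : w0 ∈ U) (m j : Fin n) :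
    fderiv ℂ (fun w => fderiv ℂ F w (Pi.single m 1)) w0 (Pi.single j 1)
      = fderiv ℂ (fun w => fderiv ℂ F w (Pi.single j 1)) w0 (Pi.single m 1) := by
  rw [fderiv_single_fderiv hU hF hw0, fderiv_single_fderiv hU hF hw0]
  exact snd_deriv_symm hU hF hw0 _ _

-- ========== chain rule lemmas ==========
variable {p q : ℕ}

lemma psi_hasFDerivAt (φ : Fin n → MatSpace p q → ℂ) (x : MatSpace p q)
    (hφ : ∀ k, DifferentiableAt ℝ (φ k) x)
    (F : (Fin n → ℂ) → ℂ) (hF : DifferentiableAt ℂ F (fun k => φ k x)) :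
    HasFDerivAt (fun y => F (fun k => φ k y))
      (((fderiv ℂ F (fun k => φ k x)).restrictScalars ℝ).comp
        (ContinuousLinearMap.pi (fun k => fderiv ℝ (φ k) x))) x := by
  have hΦ : HasFDerivAt (fun y (k : Fin n) => φ k y)
      (ContinuousLinearMap.pi (fun k => fderiv ℝ (φ k) x)) x :=
    hasFDerivAt_pi.2 (fun k => (hφ k).hasFDerivAt)
  exact (hF.hasFDerivAt.restrictScalars ℝ).comp x hΦ

lemma wz_comp (φ : Fin n → MatSpace p q → ℂ) (x v : MatSpace p q)
    (hφ : ∀ k, DifferentiableAt ℝ (φ k) x)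
    (F : (Fin n → ℂ) → ℂ) (hF : DifferentiableAt ℂ F (fun k => φ k x)) :
    wz p q (fun y => F (fun k => φ k y)) x v
      = ∑ k, fderiv ℂ F (fun j => φ j x) (Pi.single k 1) * wz p q (φ k) x v := by
  set L := fderiv ℂ F (fun k => φ k x) with hL
  set D := ContinuousLinearMap.pi (fun k => fderiv ℝ (φ k) x) with hD
  have hψ := (psi_hasFDerivAt φ x hφ F hF).fderiv
  rw [wz, hψ]
  have happ : ∀ u : MatSpace p q,
      ((L.restrictScalars ℝ).comp D) u = L (D u) := fun u => rfl
  rw [happ, happ]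
  have hIL : ∀ u : Fin n → ℂ, Complex.I * L u = L (Complex.I • u) := by
    intro u
    rw [ContinuousLinearMap.map_smul, smul_eq_mul]
  rw [hIL, ← map_sub]
  rw [clm_decomp L]
  rw [Finset.sum_div]
  refine Finset.sum_congr rfl (fun k _ => ?_)
  have hDu : ∀ u : MatSpace p q, D u k = fderiv ℝ (φ k) x u := fun u => rfl
  simp only [Pi.sub_apply, Pi.smul_apply, hDu, smul_eq_mul]
  rw [wz]
  ring

lemma wzbar_comp (φ : Fin n → MatSpace p q → ℂ) (x v : MatSpace p q)
    (hφ : ∀ k, DifferentiableAt ℝ (φ k) x)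
    (F : (Fin n → ℂ) → ℂ) (hF : DifferentiableAt ℂ F (fun k => φ k x)) :
    wzbar p q (fun y => F (fun k => φ k y)) x v
      = ∑ k, fderiv ℂ F (fun j => φ j x) (Pi.single k 1) * wzbar p q (φ k) x v := by
  set L := fderiv ℂ F (fun k => φ k x) with hL
  set D := ContinuousLinearMap.pi (fun k => fderiv ℝ (φ k) x) with hD
  have hψ := (psi_hasFDerivAt φ x hφ F hF).fderiv
  rw [wzbar, hψ]
  have happ : ∀ u : MatSpace p q,
      ((L.restrictScalars ℝ).comp D) u = L (D u) := fun u => rfl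
  rw [happ, happ]
  have hIL : ∀ u : Fin n → ℂ, Complex.I * L u = L (Complex.I • u) := by
    intro u
    rw [ContinuousLinearMap.map_smul, smul_eq_mul]
  rw [hIL, ← map_add]
  rw [clm_decomp L]
  rw [Finset.sum_div]
  refine Finset.sum_congr rfl (fun k _ => ?_)
  have hDu : ∀ u : MatSpace p q, D u k = fderiv ℝ (φ k) x u := fun u => rfl
  simp only [Pi.add_apply, Pi.smul_apply, hDu, smul_eq_mul]
  rw [wzbar]
  ring

-- ========== algebraic helpers ==========
lemma sum4_swap {α β γ δ : Type*} [Fintype α] [Fintype β] [Fintype γ] [Fintype δ]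
    (f : α → β → γ → δ → ℂ) :
    ∑ k, ∑ l, ∑ m, ∑ j, f k l m j = ∑ m, ∑ j, ∑ k, ∑ l, f k l m j := by
  calc ∑ k, ∑ l, ∑ m, ∑ j, f k l m j
      = ∑ k, ∑ m, ∑ l, ∑ j, f k l m j :=
        Finset.sum_congr rfl (fun k _ => Finset.sum_comm)
    _ = ∑ m, ∑ k, ∑ l, ∑ j, f k l m j := Finset.sum_comm
    _ = ∑ m, ∑ k, ∑ j, ∑ l, f k l m j :=
        Finset.sum_congr rfl (fun m _ => Finset.sum_congr rfl (fun k _ => Finset.sum_comm))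
    _ = ∑ m, ∑ j, ∑ k, ∑ l, f k l m j :=
        Finset.sum_congr rfl (fun m _ => Finset.sum_comm)

lemma sum3_swap {α β γ : Type*} [Fintype α] [Fintype β] [Fintype γ]
    (f : α → β → γ → ℂ) :
    ∑ k, ∑ l, ∑ m, f k l m = ∑ m, ∑ k, ∑ l, f k l m := by
  calc ∑ k, ∑ l, ∑ m, f k l m
      = ∑ k, ∑ m, ∑ l, f k l m := Finset.sum_congr rfl (fun k _ => Finset.sum_comm)
    _ = ∑ m, ∑ k, ∑ l, f k l m := Finset.sum_comm

lemma wz_sum {N : ℕ} (f : Fin N → MatSpace p q → ℂ) (x v : MatSpace p q)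
    (h : ∀ i, DifferentiableAt ℝ (f i) x) :
    wz p q (fun y => ∑ i, f i y) x v = ∑ i, wz p q (f i) x v := by
  rw [wz, fderiv_fun_sum (fun i _ => h i)]
  simp only [ContinuousLinearMap.coe_sum', Finset.sum_apply]
  rw [Finset.mul_sum, ← Finset.sum_sub_distrib, Finset.sum_div]
  exact Finset.sum_congr rfl (fun i _ => by rw [wz])

lemma wz_mul (a b : MatSpace p q → ℂ) (x v : MatSpace p q)
    (ha : DifferentiableAt ℝ a x) (hb : DifferentiableAt ℝ b x) :
    wz p q (fun y => a y * b y) x v = wz p q a x v * b x + a x * wz p q b x v := by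
  rw [wz, wz, wz, fderiv_fun_mul ha hb]
  simp only [ContinuousLinearMap.add_apply, ContinuousLinearMap.coe_smul',
    Pi.smul_apply, smul_eq_mul]
  ring

lemma wzbar_slice_contDiff (f : MatSpace p q → ℂ) (hf : ContDiff ℝ (⊤ : ℕ∞) f) (v : MatSpace p q) :
    ContDiff ℝ (⊤ : ℕ∞) (fun y => wzbar p q f y v) := by
  have h1 : ContDiff ℝ (⊤ : ℕ∞) (fun y => fderiv ℝ f y v) :=
    (hf.fderiv_right (by simp)).clm_apply contDiff_const
  have h2 : ContDiff ℝ (⊤ : ℕ∞) (fun y => fderiv ℝ f y (Complex.I • v)) :=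
    (hf.fderiv_right (by simp)).clm_apply contDiff_const
  have : (fun y => wzbar p q f y v)
      = fun y => (fderiv ℝ f y v + Complex.I * fderiv ℝ f y (Complex.I • v)) / 2 := rfl
  rw [this]
  exact (h1.add (contDiff_const.mul h2)).div_const 2

-- ========== main computation: tau ==========
lemma tau_comp (φ : Fin n → MatSpace p q → ℂ)
    (hsmooth : ∀ k, ContDiff ℝ (⊤ : ℕ∞) (φ k))
    (hτ : ∀ k x, tauSemi p q (φ k) x = 0)
    (hκ : ∀ k l x, kapSemi p q (φ k) (φ l) x = 0)
    (U : Set (Fin n → ℂ)) (hU : IsOpen U)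
    (hrange : ∀ x : MatSpace p q, (fun k => φ k x) ∈ U)
    (F : (Fin n → ℂ) → ℂ) (hF : DifferentiableOn ℂ F U) (x : MatSpace p q) :
    tauSemi p q (fun y => F (fun k => φ k y)) x = 0 := by
  have hφd : ∀ k y, DifferentiableAt ℝ (φ k) y := fun k y =>
    ((hsmooth k).differentiable (by simp)).differentiableAt
  have hFd : ∀ y : MatSpace p q, DifferentiableAt ℂ F (fun k => φ k y) := fun y =>
    hF.differentiableAt (hU.mem_nhds (hrange y))
  set c : Fin n → MatSpace p q → ℂ :=
    fun m y => fderiv ℂ F (fun k => φ k y) (Pi.single m 1) with hc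
  have hcd : ∀ m, DifferentiableAt ℝ (c m) x := by
    intro m
    have houter : DifferentiableAt ℂ (fun w => fderiv ℂ F w (Pi.single m 1))
        (fun k => φ k x) := diffAt_fderiv_single hU hF (hrange x) m
    have hΦ : DifferentiableAt ℝ (fun y (k : Fin n) => φ k y) x :=
      differentiableAt_pi.2 (fun k => hφd k x)
    exact (houter.restrictScalars ℝ).comp x hΦ
  have hwzbar_d : ∀ m (v : MatSpace p q),
      DifferentiableAt ℝ (fun y => wzbar p q (φ m) y v) x := fun m v =>
    ((wzbar_slice_contDiff _ (hsmooth m) v).differentiable (by simp)).differentiableAt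
  set H : Fin n → Fin n → ℂ := fun m j =>
    fderiv ℂ (fun w => fderiv ℂ F w (Pi.single m 1)) (fun k => φ k x) (Pi.single j 1) with hH
  have hHsymm : ∀ m j, H m j = H j m := fun m j => mixed_symm hU hF (hrange x) m j
  have hwzc : ∀ m (v : MatSpace p q),
      wz p q (c m) x v = ∑ j, H m j * wz p q (φ j) x v := fun m v =>
    wz_comp φ x v (fun k => hφd k x) _ (diffAt_fderiv_single hU hF (hrange x) m)
  have hinner : ∀ v : MatSpace p q,
      (fun y => wzbar p q (fun y' => F (fun k => φ k y')) y v)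
        = (fun y => ∑ m, c m y * wzbar p q (φ m) y v) := by
    intro v
    funext y
    exact wzbar_comp φ y v (fun k => hφd k y) F (hFd y)
  have hdir : ∀ v : MatSpace p q,
      wz p q (fun y => wzbar p q (fun y' => F (fun k => φ k y')) y v) x v
        = ∑ m, ((∑ j, H m j * wz p q (φ j) x v) * wzbar p q (φ m) x v
            + c m x * wz p q (fun y => wzbar p q (φ m) y v) x v) := by
    intro v
    rw [hinner v]
    rw [wz_sum (fun m y => c m y * wzbar p q (φ m) y v) x v
      (fun m => (hcd m).mul (hwzbar_d m v))]
    refine Finset.sum_congr rfl (fun m _ => ?_)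
    rw [wz_mul _ _ x v (hcd m) (hwzbar_d m v), hwzc m v]
  set s : Fin (p+q) → ℂ := fun k => if (k : ℕ) < p then (-4:ℂ) else 4 with hs
  set A : Fin n → Fin n → ℂ := fun a b => ∑ k, ∑ l, s k *
    (wz p q (φ a) x (basE p q k l) * wzbar p q (φ b) x (basE p q k l)) with hA
  have hAanti : ∀ a b, A a b = - A b a := by
    intro a b
    have hkap : A a b + A b a = 2 * kapSemi p q (φ a) (φ b) x := by
      rw [hA, kapSemi]
      simp only []
      rw [← Finset.sum_add_distrib, Finset.mul_sum]
      refine Finset.sum_congr rfl (fun k _ => ?_)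
      rw [← Finset.sum_add_distrib, Finset.mul_sum]
      refine Finset.sum_congr rfl (fun l _ => ?_)
      by_cases hkp : (k:ℕ) < p <;>
        simp only [hs, hkp, if_true, if_false] <;> ring
    have := hκ a b x
    rw [this, mul_zero] at hkap
    linear_combination hkap
  have step1 : tauSemi p q (fun y => F (fun k => φ k y)) x
      = ∑ k : Fin (p+q), ∑ l : Fin p, s k *
          (∑ m, ((∑ j, H m j * wz p q (φ j) x (basE p q k l)) * wzbar p q (φ m) x (basE p q k l)
            + c m x * wz p q (fun y => wzbar p q (φ m) y (basE p q k l)) x (basE p q k l))) := by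
    rw [tauSemi]
    exact Finset.sum_congr rfl (fun k _ => Finset.sum_congr rfl (fun l _ => by rw [hdir]))
  have step2 : tauSemi p q (fun y => F (fun k => φ k y)) x
      = (∑ m, ∑ j, H m j * A j m) + ∑ m, c m x * tauSemi p q (φ m) x := by
    rw [step1]
    have e1 : ∀ (k : Fin (p+q)) (l : Fin p),
        s k * (∑ m, ((∑ j, H m j * wz p q (φ j) x (basE p q k l)) * wzbar p q (φ m) x (basE p q k l)
          + c m x * wz p q (fun y => wzbar p q (φ m) y (basE p q k l)) x (basE p q k l)))
        = (∑ m, ∑ j, H m j * (s k * (wz p q (φ j) x (basE p q k l) * wzbar p q (φ m) x (basE p q k l))))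
          + ∑ m, c m x * (s k * wz p q (fun y => wzbar p q (φ m) y (basE p q k l)) x (basE p q k l)) := by
      intro k l
      rw [Finset.mul_sum, ← Finset.sum_add_distrib]
      refine Finset.sum_congr rfl (fun m _ => ?_)
      rw [Finset.sum_mul, mul_add, Finset.mul_sum]
      congr 1
      · exact Finset.sum_congr rfl (fun j _ => by ring)
      · ring
    calc ∑ k : Fin (p+q), ∑ l : Fin p, s k * _
        = ∑ k : Fin (p+q), ∑ l : Fin p,
          ((∑ m, ∑ j, H m j * (s k * (wz p q (φ j) x (basE p q k l) * wzbar p q (φ m) x (basE p q k l))))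
          + ∑ m, c m x * (s k * wz p q (fun y => wzbar p q (φ m) y (basE p q k l)) x (basE p q k l))) :=
          Finset.sum_congr rfl (fun k _ => Finset.sum_congr rfl (fun l _ => e1 k l))
      _ = (∑ k : Fin (p+q), ∑ l : Fin p, ∑ m, ∑ j,
            H m j * (s k * (wz p q (φ j) x (basE p q k l) * wzbar p q (φ m) x (basE p q k l))))
          + ∑ k : Fin (p+q), ∑ l : Fin p, ∑ m,
            c m x * (s k * wz p q (fun y => wzbar p q (φ m) y (basE p q k l)) x (basE p q k l)) := by
          rw [← Finset.sum_add_distrib]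
          refine Finset.sum_congr rfl (fun k _ => ?_)
          rw [← Finset.sum_add_distrib]
      _ = (∑ m, ∑ j, ∑ k : Fin (p+q), ∑ l : Fin p,
            H m j * (s k * (wz p q (φ j) x (basE p q k l) * wzbar p q (φ m) x (basE p q k l))))
          + ∑ m, ∑ k : Fin (p+q), ∑ l : Fin p,
            c m x * (s k * wz p q (fun y => wzbar p q (φ m) y (basE p q k l)) x (basE p q k l)) := by
          congr 1
          · exact sum4_swap _
          · exact sum3_swap _
      _ = (∑ m, ∑ j, H m j * A j m) + ∑ m, c m x * tauSemi p q (φ m) x := by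
          congr 1
          · refine Finset.sum_congr rfl (fun m _ => Finset.sum_congr rfl (fun j _ => ?_))
            rw [hA]
            simp only []
            rw [Finset.mul_sum]
            refine Finset.sum_congr rfl (fun k _ => ?_)
            rw [Finset.mul_sum]
          · refine Finset.sum_congr rfl (fun m _ => ?_)
            rw [tauSemi, Finset.mul_sum]
            refine Finset.sum_congr rfl (fun k _ => ?_)
            rw [Finset.mul_sum]
  have hS : (∑ m, ∑ j, H m j * A j m) = 0 := by
    have h2 : (∑ m, ∑ j, H m j * A j m) = - (∑ m, ∑ j, H m j * A j m) := by
      calc (∑ m, ∑ j, H m j * A j m) = ∑ j, ∑ m, H m j * A j m := Finset.sum_comm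
        _ = ∑ m, ∑ j, H m j * (- A j m) := by
            refine Finset.sum_congr rfl (fun a _ => Finset.sum_congr rfl (fun b _ => ?_))
            rw [hHsymm b a, ← hAanti a b]
        _ = - (∑ m, ∑ j, H m j * A j m) := by
            simp [mul_neg, Finset.sum_neg_distrib]
    have h3 := eq_neg_iff_add_eq_zero.1 h2
    have h4 := add_self_eq_zero.1 h3
    exact h4
  rw [step2, hS]
  simp only [hτ, mul_zero, Finset.sum_const_zero, add_zero, zero_add]

-- ========== main computation: kappa ==========
lemma kap_comp (φ : Fin n → MatSpace p q → ℂ)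
    (hsmooth : ∀ k, ContDiff ℝ (⊤ : ℕ∞) (φ k))
    (hκ : ∀ k l x, kapSemi p q (φ k) (φ l) x = 0)
    (U : Set (Fin n → ℂ)) (hU : IsOpen U)
    (hrange : ∀ x : MatSpace p q, (fun k => φ k x) ∈ U)
    (F G : (Fin n → ℂ) → ℂ) (hF : DifferentiableOn ℂ F U) (hG : DifferentiableOn ℂ G U)
    (x : MatSpace p q) :
    kapSemi p q (fun y => F (fun k => φ k y)) (fun y => G (fun k => φ k y)) x = 0 := by
  have hφd : ∀ k, DifferentiableAt ℝ (φ k) x := fun k =>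
    ((hsmooth k).differentiable (by simp)).differentiableAt
  have hFd : DifferentiableAt ℂ F (fun k => φ k x) :=
    hF.differentiableAt (hU.mem_nhds (hrange x))
  have hGd : DifferentiableAt ℂ G (fun k => φ k x) :=
    hG.differentiableAt (hU.mem_nhds (hrange x))
  set cF : Fin n → ℂ := fun a => fderiv ℂ F (fun k => φ k x) (Pi.single a 1) with hcF
  set dG : Fin n → ℂ := fun b => fderiv ℂ G (fun k => φ k x) (Pi.single b 1) with hdG
  set s : Fin (p+q) → ℂ := fun k => if (k : ℕ) < p then (-2:ℂ) else 2 with hs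
  have step : kapSemi p q (fun y => F (fun k => φ k y)) (fun y => G (fun k => φ k y)) x
      = ∑ k : Fin (p+q), ∑ l : Fin p, ∑ a, ∑ b, (cF a * dG b) *
          (s k * (wz p q (φ a) x (basE p q k l) * wzbar p q (φ b) x (basE p q k l)
            + wzbar p q (φ a) x (basE p q k l) * wz p q (φ b) x (basE p q k l))) := by
    rw [kapSemi]
    refine Finset.sum_congr rfl (fun k _ => Finset.sum_congr rfl (fun l _ => ?_))
    rw [wz_comp φ x (basE p q k l) hφd F hFd, wzbar_comp φ x (basE p q k l) hφd G hGd,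
      wzbar_comp φ x (basE p q k l) hφd F hFd, wz_comp φ x (basE p q k l) hφd G hGd]
    rw [Finset.sum_mul_sum, Finset.sum_mul_sum]
    rw [← Finset.sum_add_distrib]
    rw [Finset.mul_sum]
    refine Finset.sum_congr rfl (fun a _ => ?_)
    rw [← Finset.sum_add_distrib, Finset.mul_sum]
    exact Finset.sum_congr rfl (fun b _ => by ring)
  rw [step, sum4_swap]
  have : ∀ a b : Fin n, (∑ k : Fin (p+q), ∑ l : Fin p, (cF a * dG b) *
      (s k * (wz p q (φ a) x (basE p q k l) * wzbar p q (φ b) x (basE p q k l)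
        + wzbar p q (φ a) x (basE p q k l) * wz p q (φ b) x (basE p q k l))))
      = (cF a * dG b) * kapSemi p q (φ a) (φ b) x := by
    intro a b
    rw [kapSemi, Finset.mul_sum]
    refine Finset.sum_congr rfl (fun k _ => ?_)
    rw [Finset.mul_sum]
  calc ∑ a, ∑ b, (∑ k : Fin (p+q), ∑ l : Fin p, (cF a * dG b) *
      (s k * (wz p q (φ a) x (basE p q k l) * wzbar p q (φ b) x (basE p q k l)
        + wzbar p q (φ a) x (basE p q k l) * wz p q (φ b) x (basE p q k l))))
      = ∑ a, ∑ b, (cF a * dG b) * kapSemi p q (φ a) (φ b) x :=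
        Finset.sum_congr rfl (fun a _ => Finset.sum_congr rfl (fun b _ => this a b))
    _ = 0 := by simp [hκ]


end Aux

open Metric MeasureTheory intervalIntegral Real Topology Filter

/-- post-composing an orthogonal harmonic family `φ₁,…,φₙ` with holomorphic
functions `F, G` defined on an open set containing the image again yields functions
`ψ₁ = F(φ₁,…,φₙ)`, `ψ₂ = G(φ₁,…,φₙ)` with `τ(ψᵢ) = 0` and `κ(ψ₁,ψ₂) = 0`. -/
theorem stmt6 (p q n : ℕ) (φ : Fin n → MatSpace p q → ℂ)
    (hsmooth : ∀ k, ContDiff ℝ (⊤ : ℕ∞) (φ k))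
    (hτ : ∀ k x, tauSemi p q (φ k) x = 0)
    (hκ : ∀ k l x, kapSemi p q (φ k) (φ l) x = 0)
    (U : Set (Fin n → ℂ)) (hU : IsOpen U)
    (hrange : ∀ x : MatSpace p q, (fun k => φ k x) ∈ U)
    (F G : (Fin n → ℂ) → ℂ)
    (hF : DifferentiableOn ℂ F U) (hG : DifferentiableOn ℂ G U)
    (x : MatSpace p q) :
    tauSemi p q (fun y => F (fun k => φ k y)) x = 0 ∧
    tauSemi p q (fun y => G (fun k => φ k y)) x = 0 ∧
    kapSemi p q (fun y => F (fun k => φ k y)) (fun y => G (fun k => φ k y)) x = 0 :=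
  ⟨tau_comp φ hsmooth hτ hκ U hU hrange F hF x,
   tau_comp φ hsmooth hτ hκ U hU hrange G hG x,
   kap_comp φ hsmooth hκ U hU hrange F G hF hG x⟩

end
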